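/- arXiv:1901.07746 — 2 statements merged into one kernel-verified Lean document; each statement's English description precedes it below -/
import Mathlib

section
/- Let A₁, ..., A_l be p×p Hermitian matrices with all eigenvalues of A_j bounded in absolute value by M_j. Then |tr(A₁ ∘ ⋯ ∘ A_l)| ≤ min{rank(A₁),...,rank(A_l)} · M₁ ⋯ M_l, where ∘ denotes the Hadamard (entrywise) product. -/
/-!
Pick `j₀` of minimal rank. The trace of the Hadamard product is `∑ᵢ (A j₀)ᵢᵢ dᵢ` with
`dᵢ = ∏_{j ≠ j₀} (A j)ᵢᵢ`, and `‖dᵢ‖ ≤ ∏_{j ≠ j₀} M j` because each diagonal entry of a Hermitian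
matrix is a convex combination of its eigenvalues. Diagonalizing `A j₀ = U diag(λ) Uᴴ` turns the sum
into `∑ₖ λₖ cₖ` with `cₖ = ∑ᵢ |Uᵢₖ|² dᵢ`, again a convex combination of the `dᵢ`, and only
`rank (A j₀)` of the `λₖ` are non-zero.
-/

open Matrix Finset

theorem norm_sum_smul_le_of_sum_eq_one {ι E : Type*} [SeminormedAddCommGroup E] [NormedSpace ℝ E]
    (s : Finset ι) {w : ι → ℝ} {z : ι → E} {C : ℝ} (hw₀ : ∀ i ∈ s, 0 ≤ w i)
    (hw₁ : ∑ i ∈ s, w i = 1) (hz : ∀ i ∈ s, ‖z i‖ ≤ C) :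
    ‖∑ i ∈ s, w i • z i‖ ≤ C := by
  simpa using (convex_closedBall (0 : E) C).sum_mem hw₀ hw₁ (by simpa using hz)

theorem norm_sum_smul_le_card_mul {ι E : Type*} [Fintype ι] [SeminormedAddCommGroup E]
    [NormedSpace ℝ E] {w : ι → ℝ} {z : ι → E} {M C : ℝ} (hw : ∀ i, |w i| ≤ M)
    (hz : ∀ i, ‖z i‖ ≤ C) :
    ‖∑ i, w i • z i‖ ≤ #{i | w i ≠ 0} * (M * C) := by
  have h_supp : ∑ i with w i ≠ 0, w i • z i = ∑ i, w i • z i :=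
    sum_filter_of_ne fun i _ h hw0 => h (by rw [hw0, zero_smul])
  rw [← h_supp, ← nsmul_eq_mul]
  refine (norm_sum_le _ _).trans (sum_le_card_nsmul _ _ _ fun i _ => ?_)
  rw [norm_smul, Real.norm_eq_abs]
  exact mul_le_mul (hw i) (hz i) (norm_nonneg _) ((abs_nonneg _).trans (hw i))

namespace Matrix

theorem foldr_hadamard_ofFn {α m n : Type*} [CommMonoid α] {l : ℕ} (A : Fin l → Matrix m n α) :
    (List.ofFn A).foldr hadamard (of fun _ _ => 1) = of fun i j => ∏ k, A k i j := by
  induction l with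
  | zero => rfl
  | succ l ih =>
    ext i j
    simp [List.ofFn_succ, ih, Fin.prod_univ_succ]

variable {𝕜 n : Type*} [RCLike 𝕜] [Fintype n] [DecidableEq n]

theorem sum_norm_sq_apply_right_of_mem_unitaryGroup {U : Matrix n n 𝕜}
    (hU : U ∈ unitaryGroup n 𝕜) (i : n) : ∑ k, ‖U i k‖ ^ 2 = 1 := by
  have h := congrFun (congrFun (mem_unitaryGroup_iff.mp hU) i) i
  simp only [mul_apply, star_apply, RCLike.star_def, RCLike.mul_conj, one_apply_eq] at h
  exact_mod_cast h

theorem sum_norm_sq_apply_left_of_mem_unitaryGroup {U : Matrix n n 𝕜}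
    (hU : U ∈ unitaryGroup n 𝕜) (k : n) : ∑ i, ‖U i k‖ ^ 2 = 1 := by
  simpa using sum_norm_sq_apply_right_of_mem_unitaryGroup (Unitary.star_mem hU) k

namespace IsHermitian

variable {A : Matrix n n 𝕜} (hA : A.IsHermitian)

theorem apply_self_eq_sum (i : n) :
    A i i = ∑ k, ‖(hA.eigenvectorUnitary : Matrix n n 𝕜) i k‖ ^ 2 • (hA.eigenvalues k : 𝕜) := by
  conv_lhs => rw [hA.spectral_theorem, Unitary.conjStarAlgAut_apply, mul_apply]
  simp only [mul_diagonal, star_apply, RCLike.star_def, Function.comp_apply]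
  refine sum_congr rfl fun k _ => ?_
  rw [RCLike.real_smul_eq_coe_mul, RCLike.ofReal_pow, ← RCLike.mul_conj]
  ring

theorem norm_apply_self_le {M : ℝ} (hM : ∀ k, |hA.eigenvalues k| ≤ M) (i : n) : ‖A i i‖ ≤ M := by
  rw [hA.apply_self_eq_sum]
  exact norm_sum_smul_le_of_sum_eq_one univ (fun _ _ => by positivity)
    (sum_norm_sq_apply_right_of_mem_unitaryGroup hA.eigenvectorUnitary.2 i)
    (fun k _ => by simpa using hM k)

theorem norm_sum_apply_self_mul_le {M C : ℝ} (hM : ∀ k, |hA.eigenvalues k| ≤ M) {d : n → 𝕜}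
    (hd : ∀ i, ‖d i‖ ≤ C) : ‖∑ i, A i i * d i‖ ≤ A.rank * (M * C) := by
  set U : Matrix n n 𝕜 := (hA.eigenvectorUnitary : Matrix n n 𝕜)
  have h_expand : ∑ i, A i i * d i = ∑ k, hA.eigenvalues k • ∑ i, ‖U i k‖ ^ 2 • d i := by
    simp_rw [hA.apply_self_eq_sum, sum_mul, smul_sum]
    rw [sum_comm]
    refine sum_congr rfl fun k _ => sum_congr rfl fun i _ => ?_
    simp only [RCLike.real_smul_eq_coe_mul, U]
    ring
  have h_avg (k : n) : ‖∑ i, ‖U i k‖ ^ 2 • d i‖ ≤ C :=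
    norm_sum_smul_le_of_sum_eq_one univ (fun _ _ => by positivity)
      (sum_norm_sq_apply_left_of_mem_unitaryGroup hA.eigenvectorUnitary.2 k) (fun i _ => hd i)
  rw [h_expand, hA.rank_eq_card_non_zero_eigs, Fintype.card_subtype]
  exact norm_sum_smul_le_card_mul hM h_avg

end IsHermitian

end Matrix

/-- Hadamard product trace bound: if `A₁,...,A_l` are p×p Hermitian matrices whose
eigenvalues are bounded in absolute value by `M₁,...,M_l`, then
`|tr(A₁ ∘ ⋯ ∘ A_l)| ≤ min_j rank(A_j) · M₁ ⋯ M_l`. -/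
theorem trace_hadamard_prod_le {p l : ℕ} (hl : 0 < l)
    (A : Fin l → Matrix (Fin p) (Fin p) ℂ)
    (hA : ∀ j, (A j).IsHermitian)
    (M : Fin l → ℝ)
    (hM : ∀ j i, |(hA j).eigenvalues i| ≤ M j) :
    ‖((List.ofFn A).foldr Matrix.hadamard
        (Matrix.of fun _ _ => (1 : ℂ))).trace‖ ≤
      (Finset.univ.inf' ⟨⟨0, hl⟩, Finset.mem_univ _⟩ (fun j => (A j).rank) : ℝ) *
        ∏ j, M j := by
  obtain ⟨j₀, -, hj₀⟩ := exists_mem_eq_inf' ⟨⟨0, hl⟩, mem_univ _⟩ fun j => ((A j).rank : ℝ)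
  have h_trace : ((List.ofFn A).foldr hadamard (of fun _ _ => (1 : ℂ))).trace =
      ∑ i, A j₀ i i * ∏ j ∈ univ.erase j₀, A j i i := by
    simp only [foldr_hadamard_ofFn, trace, diag_apply, of_apply]
    exact sum_congr rfl fun i _ => (mul_prod_erase _ _ (mem_univ j₀)).symm
  have h_rest (i : Fin p) : ‖∏ j ∈ univ.erase j₀, A j i i‖ ≤ ∏ j ∈ univ.erase j₀, M j := by
    rw [norm_prod]
    exact prod_le_prod (fun _ _ => norm_nonneg _) fun j _ => (hA j).norm_apply_self_le (hM j) i
  rw [hj₀, h_trace, ← mul_prod_erase univ M (mem_univ j₀)]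
  exact (hA j₀).norm_sum_apply_self_mul_le (hM j₀) h_rest
end

section
/- Let A = (a_{jk}) be an n×n Hermitian matrix with eigenvalues λ₁,...,λ_n, and let f : ℝ → ℝ be convex. Then Σ_{j=1}^n f(a_{jj}) ≤ Σ_{j=1}^n f(λ_j). -/
/-!
By the spectral theorem `A = U diag(λ) U*` with `U` unitary, so `a_jj = ∑ i, |u_ji|² λ_i`.
Unitarity makes `(|u_ji|²)` doubly stochastic: Jensen's inequality along each row, followed by
summing over the columns, gives `∑ j, f a_jj ≤ ∑ i, f λ_i`.
-/

open Matrix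

section Jensen

variable {𝕜 β n : Type*} [Field 𝕜] [LinearOrder 𝕜] [IsStrictOrderedRing 𝕜]
  [AddCommGroup β] [PartialOrder β] [IsOrderedAddMonoid β] [Module 𝕜 β] [IsStrictOrderedModule 𝕜 β]
  [Fintype n] [DecidableEq n]

theorem ConvexOn.sum_map_mulVec_le_of_mem_doublyStochastic {s : Set 𝕜} {f : 𝕜 → β}
    (hf : ConvexOn 𝕜 s f) {M : Matrix n n 𝕜} (hM : M ∈ doublyStochastic 𝕜 n) {x : n → 𝕜}
    (hx : ∀ i, x i ∈ s) :
    ∑ j, f ((M *ᵥ x) j) ≤ ∑ i, f (x i) :=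
  calc ∑ j, f ((M *ᵥ x) j)
      ≤ ∑ j, ∑ i, M j i • f (x i) := Finset.sum_le_sum fun j _ => by
        simpa only [mulVec, dotProduct, smul_eq_mul] using
          hf.map_sum_le (fun i _ => nonneg_of_mem_doublyStochastic hM)
            (sum_row_of_mem_doublyStochastic hM j) (fun i _ => hx i)
    _ = ∑ i, f (x i) := by
        rw [Finset.sum_comm]
        simp only [← Finset.sum_smul, sum_col_of_mem_doublyStochastic hM, one_smul]

end Jensen

section Unitary

variable {𝕜 n : Type*} [RCLike 𝕜] [Fintype n] [DecidableEq n]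

theorem Matrix.map_norm_sq_mem_doublyStochastic {U : Matrix n n 𝕜} (hU : U ∈ unitaryGroup n 𝕜) :
    U.map (‖·‖ ^ 2) ∈ doublyStochastic ℝ n := by
  refine mem_doublyStochastic_iff_sum.2 ⟨fun _ _ => sq_nonneg _, fun i => ?_, fun j => ?_⟩
  · have h := congrFun (congrFun (mem_unitaryGroup_iff.1 hU) i) i
    simp only [mul_apply, star_apply, one_apply_eq, RCLike.star_def, RCLike.mul_conj] at h
    exact_mod_cast h
  · have h := congrFun (congrFun (mem_unitaryGroup_iff'.1 hU) j) j
    simp only [mul_apply, star_apply, one_apply_eq, RCLike.star_def, RCLike.conj_mul] at h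
    exact_mod_cast h

theorem Matrix.IsHermitian.re_diag_eq_mulVec_eigenvalues {A : Matrix n n 𝕜} (hA : A.IsHermitian)
    (j : n) :
    RCLike.re (A j j) =
      ((hA.eigenvectorUnitary : Matrix n n 𝕜).map (‖·‖ ^ 2) *ᵥ hA.eigenvalues) j := by
  conv_lhs => rw [hA.spectral_theorem, Unitary.conjStarAlgAut_apply]
  rw [mul_apply]
  simp only [mul_diagonal, star_apply, mulVec, dotProduct, map_apply, map_sum]
  refine Finset.sum_congr rfl fun i _ => ?_
  rw [mul_right_comm, RCLike.star_def, RCLike.mul_conj, Function.comp_apply, ← RCLike.ofReal_pow,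
    ← RCLike.ofReal_mul, RCLike.ofReal_re]

end Unitary

/-- Schur majorization: for an n×n Hermitian matrix `A` with eigenvalues `λ₁,...,λ_n`
and a convex function `f : ℝ → ℝ`, `Σ_j f(a_{jj}) ≤ Σ_j f(λ_j)`. -/
theorem sum_convex_diag_le_sum_convex_eigenvalues {n : ℕ}
    (A : Matrix (Fin n) (Fin n) ℂ) (hA : A.IsHermitian)
    (f : ℝ → ℝ) (hf : ConvexOn ℝ Set.univ f) :
    ∑ j, f ((A j j).re) ≤ ∑ j, f (hA.eigenvalues j) := by
  simp only [← RCLike.re_to_complex, hA.re_diag_eq_mulVec_eigenvalues]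
  exact hf.sum_map_mulVec_le_of_mem_doublyStochastic
    (map_norm_sq_mem_doublyStochastic hA.eigenvectorUnitary.2) fun _ => trivial
end
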